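/- arXiv:2205.05530 — 2 statements merged into one kernel-verified Lean document; each statement's English description precedes it below -/
import Mathlib

section
/- Let A be a real symmetric n×n matrix and B a principal (n-1)×(n-1) submatrix of A. If μ₁≥…≥μₙ are the eigenvalues of A and μ'₁≥…≥μ'_{n-1} those of B, then μᵢ ≥ μ'ᵢ ≥ μ_{i+1} for all 1≤i≤n-1. -/
open Matrix

noncomputable section

def enorm {d : ℕ} (v : Fin d → ℝ) : ℝ := Real.sqrt (∑ i, v i ^ 2)

def dvec {n d : ℕ} (p : Fin n → Fin d → ℝ) (i j : Fin n) : Fin d → ℝ :=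
  if p i = p j then 0 else (_root_.enorm (p i - p j))⁻¹ • (p i - p j)

abbrev EdgeIdx {n : ℕ} (G : SimpleGraph (Fin n)) [DecidableRel G.Adj] : Type :=
  {e : Fin n × Fin n // e.1 < e.2 ∧ G.Adj e.1 e.2}

def rigidity {n d : ℕ} (G : SimpleGraph (Fin n)) [DecidableRel G.Adj]
    (p : Fin n → Fin d → ℝ) : Matrix (Fin n × Fin d) (EdgeIdx G) ℝ :=
  fun v e => ((if v.1 = e.1.1 then (1:ℝ) else 0) - (if v.1 = e.1.2 then 1 else 0))
      * dvec p e.1.1 e.1.2 v.2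

def stiffness {n d : ℕ} (G : SimpleGraph (Fin n)) [DecidableRel G.Adj]
    (p : Fin n → Fin d → ℝ) : Matrix (Fin n × Fin d) (Fin n × Fin d) ℝ :=
  rigidity G p * (rigidity G p)ᴴ

def lowerStiffness {n d : ℕ} (G : SimpleGraph (Fin n)) [DecidableRel G.Adj]
    (p : Fin n → Fin d → ℝ) : Matrix (EdgeIdx G) (EdgeIdx G) ℝ :=
  (rigidity G p)ᴴ * rigidity G p

theorem stiffness_isHermitian {n d : ℕ} (G : SimpleGraph (Fin n)) [DecidableRel G.Adj]
    (p : Fin n → Fin d → ℝ) : (stiffness G p).IsHermitian :=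
  Matrix.isHermitian_mul_conjTranspose_self _

def eigs {m : Type*} [Fintype m] [DecidableEq m] (A : Matrix m m ℝ)
    (hA : A.IsHermitian) : Multiset ℝ :=
  Finset.univ.val.map hA.eigenvalues

def ascEigs {m : Type*} [Fintype m] [DecidableEq m] (A : Matrix m m ℝ)
    (hA : A.IsHermitian) : List ℝ :=
  (eigs A hA).sort (· ≤ ·)

def nthSmallest {m : Type*} [Fintype m] [DecidableEq m] (A : Matrix m m ℝ)
    (hA : A.IsHermitian) (k : ℕ) : ℝ :=
  (ascEigs A hA).getD (k-1) 0

/-- List of eigenvalues of a real symmetric matrix, with multiplicity,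
in decreasing order. -/
def descEigs {m : Type*} [Fintype m] [DecidableEq m] (A : Matrix m m ℝ)
    (hA : A.IsHermitian) : List ℝ :=
  (ascEigs A hA).reverse

/-! Both inequalities are Courant–Fischer arguments. If the Rayleigh quotient of a symmetric
`T` is at least `c` on a subspace `V` with `dim V > i`, then `V` meets the span of the
eigenvectors of index `≥ i` nontrivially, and there the Rayleigh quotient is at most `λᵢ`; hence
`c ≤ λᵢ`, and dually for upper bounds. Deleting row and column `k` compresses `A` along the
isometric embedding that inserts a zero coordinate at `k`, so the span of the top `i + 1`
eigenvectors of `B` embeds into a space on which the Rayleigh quotient of `A` is `≥ μ'ᵢ`, and the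
span of its bottom `n - i` eigenvectors into one on which it is `≤ μ'ᵢ`. -/

open Module Submodule
open scoped RealInnerProductSpace

namespace Orthonormal

variable {ι E : Type*} [NormedAddCommGroup E] [InnerProductSpace ℝ E] {v : ι → E}

theorem inner_eq_zero_of_mem_span_image (hv : Orthonormal ℝ v) {S : Set ι} {j : ι} (hj : j ∉ S)
    {x : E} (hx : x ∈ span ℝ (v '' S)) : ⟪v j, x⟫ = 0 := by
  obtain ⟨l, hl, rfl⟩ := (Finsupp.mem_span_image_iff_linearCombination ℝ).mp hx
  rw [real_inner_comm]
  exact hv.inner_finsupp_eq_zero hj hl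

theorem finrank_span_image (hv : Orthonormal ℝ v) (S : Finset ι) :
    finrank ℝ (span ℝ (v '' S)) = S.card := by
  rw [Set.image_eq_range, finrank_span_eq_card (b := fun j : (S : Set ι) => v j)
    (hv.linearIndependent.comp _ Subtype.val_injective)]
  simp

end Orthonormal

namespace OrthonormalBasis

variable {ι E : Type*} [Fintype ι] [NormedAddCommGroup E] [InnerProductSpace ℝ E]
  {T : E →ₗ[ℝ] E} {b : OrthonormalBasis ι ℝ E} {μ : ι → ℝ}

theorem inner_apply_self_eq_sum (hT : T.IsSymmetric) (hb : ∀ j, T (b j) = μ j • b j) (x : E) :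
    ⟪T x, x⟫ = ∑ j, μ j * ⟪b j, x⟫ ^ 2 := by
  rw [← b.sum_inner_mul_inner]
  refine Finset.sum_congr rfl fun j _ => ?_
  rw [hT, hb, inner_smul_right, real_inner_comm x]
  ring

theorem inner_apply_self_le_of_mem_span (hT : T.IsSymmetric) (hb : ∀ j, T (b j) = μ j • b j)
    {S : Finset ι} {a : ℝ} (hμ : ∀ j ∈ S, μ j ≤ a) {x : E} (hx : x ∈ span ℝ (b '' S)) :
    ⟪T x, x⟫ ≤ a * ‖x‖ ^ 2 := by
  rw [inner_apply_self_eq_sum hT hb, ← b.sum_sq_inner_right, Finset.mul_sum]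
  refine Finset.sum_le_sum fun j _ => ?_
  by_cases hj : j ∈ S
  · exact mul_le_mul_of_nonneg_right (hμ j hj) (sq_nonneg _)
  · simp [b.orthonormal.inner_eq_zero_of_mem_span_image (Finset.mem_coe.not.mpr hj) hx]

theorem le_inner_apply_self_of_mem_span (hT : T.IsSymmetric) (hb : ∀ j, T (b j) = μ j • b j)
    {S : Finset ι} {c : ℝ} (hμ : ∀ j ∈ S, c ≤ μ j) {x : E} (hx : x ∈ span ℝ (b '' S)) :
    c * ‖x‖ ^ 2 ≤ ⟪T x, x⟫ := by
  rw [inner_apply_self_eq_sum hT hb, ← b.sum_sq_inner_right, Finset.mul_sum]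
  refine Finset.sum_le_sum fun j _ => ?_
  by_cases hj : j ∈ S
  · exact mul_le_mul_of_nonneg_right (hμ j hj) (sq_nonneg _)
  · simp [b.orthonormal.inner_eq_zero_of_mem_span_image (Finset.mem_coe.not.mpr hj) hx]

end OrthonormalBasis

namespace LinearMap

variable {E F : Type*} [NormedAddCommGroup E] [InnerProductSpace ℝ E] [FiniteDimensional ℝ E]
  [NormedAddCommGroup F] [InnerProductSpace ℝ F] [FiniteDimensional ℝ F]
  {T : E →ₗ[ℝ] E} {S : F →ₗ[ℝ] F}

theorem le_of_rayleigh_bounds {U V : Submodule ℝ E}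
    (hUV : finrank ℝ E < finrank ℝ U + finrank ℝ V) {a c : ℝ}
    (hU : ∀ x ∈ U, ⟪T x, x⟫ ≤ a * ‖x‖ ^ 2) (hV : ∀ x ∈ V, c * ‖x‖ ^ 2 ≤ ⟪T x, x⟫) : c ≤ a := by
  have hUV' : ¬ Disjoint U V := fun h => (finrank_add_finrank_le_of_disjoint h).not_gt hUV
  obtain ⟨x, hxU, hxV, hx0⟩ : ∃ x ∈ U, x ∈ V ∧ x ≠ 0 := by
    simpa [Submodule.disjoint_def] using hUV'
  have hpos : 0 < ‖x‖ ^ 2 := by positivity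
  exact le_of_mul_le_mul_right ((hV x hxV).trans (hU x hxU)) hpos

namespace IsSymmetric

theorem le_eigenvalues_of_lt_finrank {n : ℕ} (hT : T.IsSymmetric) (hn : finrank ℝ E = n)
    {V : Submodule ℝ E} (i : Fin n) (hV : i < finrank ℝ V) {c : ℝ}
    (h : ∀ x ∈ V, c * ‖x‖ ^ 2 ≤ ⟪T x, x⟫) : c ≤ hT.eigenvalues hn i := by
  refine le_of_rayleigh_bounds (U := span ℝ (hT.eigenvectorBasis hn '' Finset.Ici i)) ?_ ?_ h
  · rw [(hT.eigenvectorBasis hn).orthonormal.finrank_span_image, Fin.card_Ici, hn]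
    omega
  · exact fun x hx => OrthonormalBasis.inner_apply_self_le_of_mem_span hT
      (hT.apply_eigenvectorBasis hn)
      (fun j hj => hT.eigenvalues_antitone hn (Finset.mem_Ici.mp hj)) hx

theorem eigenvalues_le_of_le_finrank_add {n : ℕ} (hT : T.IsSymmetric) (hn : finrank ℝ E = n)
    {V : Submodule ℝ E} (i : Fin n) (hV : n ≤ finrank ℝ V + i) {a : ℝ}
    (h : ∀ x ∈ V, ⟪T x, x⟫ ≤ a * ‖x‖ ^ 2) : hT.eigenvalues hn i ≤ a := by
  refine le_of_rayleigh_bounds (V := span ℝ (hT.eigenvectorBasis hn '' Finset.Iic i)) ?_ h ?_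
  · rw [(hT.eigenvectorBasis hn).orthonormal.finrank_span_image, Fin.card_Iic, hn]
    omega
  · exact fun x hx => OrthonormalBasis.le_inner_apply_self_of_mem_span hT
      (hT.apply_eigenvectorBasis hn)
      (fun j hj => hT.eigenvalues_antitone hn (Finset.mem_Iic.mp hj)) hx

theorem eigenvalues_interlace (hT : T.IsSymmetric) (hS : S.IsSymmetric) (J : F →ₗᵢ[ℝ] E)
    (hJ : ∀ y, ⟪T (J y), J y⟫ = ⟪S y, y⟫) {m r : ℕ} (hm : finrank ℝ F = m)
    (hn : finrank ℝ E = m + r) (i : Fin m) :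
    hS.eigenvalues hm i ≤ hT.eigenvalues hn ⟨i, by omega⟩ ∧
      hT.eigenvalues hn ⟨i + r, by omega⟩ ≤ hS.eigenvalues hm i := by
  have finrank_map (W : Submodule ℝ F) : finrank ℝ (W.map J.toLinearMap) = finrank ℝ W :=
    (Submodule.equivMapOfInjective _ J.injective W).finrank_eq.symm
  have hb := (hS.eigenvectorBasis hm).orthonormal
  constructor
  · refine hT.le_eigenvalues_of_lt_finrank hn
      (V := (span ℝ (hS.eigenvectorBasis hm '' Finset.Iic i)).map J.toLinearMap) _
      (by simp [finrank_map, hb.finrank_span_image]) ?_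
    rintro _ ⟨y, hy, rfl⟩
    rw [LinearIsometry.coe_toLinearMap, hJ, J.norm_map]
    exact OrthonormalBasis.le_inner_apply_self_of_mem_span hS (hS.apply_eigenvectorBasis hm)
      (fun j hj => hS.eigenvalues_antitone hm (Finset.mem_Iic.mp hj)) hy
  · refine hT.eigenvalues_le_of_le_finrank_add hn
      (V := (span ℝ (hS.eigenvectorBasis hm '' Finset.Ici i)).map J.toLinearMap) _
      (by simp [finrank_map, hb.finrank_span_image]; omega) ?_
    rintro _ ⟨y, hy, rfl⟩
    rw [LinearIsometry.coe_toLinearMap, hJ, J.norm_map]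
    exact OrthonormalBasis.inner_apply_self_le_of_mem_span hS (hS.apply_eigenvectorBasis hm)
      (fun j hj => hS.eigenvalues_antitone hm (Finset.mem_Ici.mp hj)) hy

end IsSymmetric

end LinearMap

namespace Matrix

variable {l m : Type*} [Fintype m] [DecidableEq m]

theorem descEigs_eq_ofFn {A : Matrix m m ℝ} (hA : A.IsHermitian) :
    descEigs A hA = List.ofFn hA.eigenvalues₀ := by
  have hperm : eigs A hA = (List.ofFn hA.eigenvalues₀ : Multiset ℝ) := by
    rw [eigs, ← Fin.univ_val_map, ← Multiset.map_univ_val_equiv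
      (Fintype.equivOfCardEq (Fintype.card_fin _)).symm, Multiset.map_map]
    rfl
  rw [descEigs, ascEigs, List.reverse_eq_iff]
  refine List.Perm.eq_of_sortedLE ?_ ?_ ?_
  · exact (Multiset.pairwise_sort _ _).sortedLE
  · exact hA.eigenvalues₀_antitone.sortedGE_ofFn.reverse
  · rw [← Multiset.coe_eq_coe, Multiset.sort_eq, hperm, Multiset.coe_reverse]

theorem getD_descEigs {A : Matrix m m ℝ} (hA : A.IsHermitian) {N : ℕ}
    (hN : finrank ℝ (EuclideanSpace ℝ m) = N) {i : ℕ} (hi : i < N) :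
    (descEigs A hA).getD i 0 =
      (isSymmetric_toEuclideanLin_iff.mpr hA).eigenvalues hN ⟨i, hi⟩ := by
  obtain rfl : Fintype.card m = N := finrank_euclideanSpace.symm.trans hN
  rw [descEigs_eq_ofFn, List.getD_eq_getElem _ _ (by simpa using hi), List.getElem_ofFn]
  rfl

theorem conjTranspose_mul_mul_submatrix_one (A : Matrix m m ℝ) (e : l → m) :
    ((1 : Matrix m m ℝ).submatrix id e)ᴴ * A * (1 : Matrix m m ℝ).submatrix id e =
      A.submatrix e e := by
  ext i j
  simp [mul_apply, one_apply]

theorem conjTranspose_mul_submatrix_one [DecidableEq l] {e : l → m} (he : Function.Injective e) :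
    ((1 : Matrix m m ℝ).submatrix id e)ᴴ * (1 : Matrix m m ℝ).submatrix id e = 1 := by
  rw [← Matrix.mul_one (_ᴴ), conjTranspose_mul_mul_submatrix_one, submatrix_one _ he]

variable [Fintype l] [DecidableEq l]

theorem inner_toEuclideanLin_conjTranspose_mul (P Q : Matrix m l ℝ) (x y : EuclideanSpace ℝ l) :
    ⟪toEuclideanLin (Pᴴ * Q) x, y⟫ = ⟪toEuclideanLin Q x, toEuclideanLin P y⟫ := by
  rw [← LinearMap.adjoint_inner_left, ← toEuclideanLin_conjTranspose_eq_adjoint]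
  simp [toLpLin_apply, mulVec_mulVec]

def toEuclideanIsometry (P : Matrix m l ℝ) (hP : Pᴴ * P = 1) :
    EuclideanSpace ℝ l →ₗᵢ[ℝ] EuclideanSpace ℝ m :=
  (toEuclideanLin P).isometryOfInner fun x y => by
    rw [← inner_toEuclideanLin_conjTranspose_mul, hP, toLpLin_one, LinearMap.id_apply]

theorem descEigs_submatrix_interlace {A : Matrix m m ℝ} (hA : A.IsHermitian) {e : l → m}
    (he : Function.Injective e) (hB : (A.submatrix e e).IsHermitian) {p r : ℕ}
    (hl : Fintype.card l = p) (hm : Fintype.card m = p + r) {i : ℕ} (hi : i < p) :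
    (descEigs _ hB).getD i 0 ≤ (descEigs _ hA).getD i 0 ∧
      (descEigs _ hA).getD (i + r) 0 ≤ (descEigs _ hB).getD i 0 := by
  rw [getD_descEigs hB (finrank_euclideanSpace.trans hl) hi,
    getD_descEigs hA (finrank_euclideanSpace.trans hm) (by omega),
    getD_descEigs hA (finrank_euclideanSpace.trans hm) (by omega)]
  refine (isSymmetric_toEuclideanLin_iff.mpr hA).eigenvalues_interlace _
    (toEuclideanIsometry _ (conjTranspose_mul_submatrix_one he)) (fun y => ?_) _ _ ⟨i, hi⟩
  rw [← conjTranspose_mul_mul_submatrix_one A e, Matrix.mul_assoc,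
    inner_toEuclideanLin_conjTranspose_mul, toLpLin_mul_same]
  rfl

end Matrix

/-- Cauchy interlacing: if `B` is the principal submatrix of the real symmetric
matrix `A` obtained by deleting row and column `k`, and `μ₁ ≥ … ≥ μ_{n+1}`,
`μ'₁ ≥ … ≥ μ'ₙ` are the eigenvalues of `A`, `B` respectively, then
`μᵢ ≥ μ'ᵢ ≥ μ_{i+1}` for all `1 ≤ i ≤ n`. -/
theorem cauchy_interlacing (n : ℕ) (A : Matrix (Fin (n+1)) (Fin (n+1)) ℝ)
    (hA : A.IsHermitian) (k : Fin (n+1))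
    (hB : (A.submatrix k.succAbove k.succAbove).IsHermitian) :
    ∀ i : Fin n,
      (descEigs _ hB).getD i 0 ≤ (descEigs _ hA).getD i 0 ∧
      (descEigs _ hA).getD (i.1 + 1) 0 ≤ (descEigs _ hB).getD i 0 := fun i =>
  descEigs_submatrix_interlace hA Fin.succAbove_right_injective hB (Fintype.card_fin n)
    (Fintype.card_fin (n + 1)) i.2
end
end

section
/- Let p:[n]→ℝ^d satisfy ‖p(i)‖=1 for all i and Σᵢ p(i)=0, and suppose the image of p has at least 3 points. Then n/2 is an eigenvalue of L(K_n,p) with multiplicity at least n-1. -/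
open Matrix

noncomputable section

/-!
For `f` with `∑ f = 0` put `φ_f(ij) = (f i + f j) ‖p i - p j‖`. For unit vectors,
`(p i - p j) ⬝ (a p i - b p j) = (a + b) ‖p i - p j‖² / 2`, which makes `φ_f` an eigenvector of the
lower stiffness matrix `Rᴴ R` for `n / 2`, so `R φ_f` is an eigenvector of `L = R Rᴴ` for `n / 2`.
Since `∑ p = 0 = ∑ f`, `(R φ_f)_i = n f_i p_i - ∑_j f_j p_j`; this vanishes only if all `f_i p_i`
coincide, which for `f ≠ 0` confines the unit vectors `p i` to two antipodal points. Hence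
`f ↦ R φ_f` is injective on the `(n - 1)`-dimensional space of sum-zero `f`.
-/

theorem Matrix.IsHermitian.finrank_le_count_eigenvalues {𝕜 m : Type*} [RCLike 𝕜] [Fintype m]
    [DecidableEq m] {A : Matrix m m 𝕜} (hA : A.IsHermitian) {μ : ℝ} {W : Submodule 𝕜 (m → 𝕜)}
    (hW : ∀ x ∈ W, A *ᵥ x = (μ : 𝕜) • x) :
    Module.finrank 𝕜 W ≤ Multiset.count μ (Finset.univ.val.map hA.eigenvalues) := by
  have hWle : W ≤ Module.End.eigenspace (toLin' A) μ := fun x hx =>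
    Module.End.mem_eigenspace_iff.2 (by simpa using hW x hx)
  calc Module.finrank 𝕜 W ≤ Module.finrank 𝕜 (Module.End.eigenspace (toLin' A) μ) :=
        Submodule.finrank_mono hWle
    _ ≤ (toLin' A).charpoly.rootMultiplicity (μ : 𝕜) := LinearMap.finrank_eigenspace_le _ _
    _ = Multiset.count μ (Finset.univ.val.map hA.eigenvalues) := by
        rw [Matrix.charpoly_toLin', ← Polynomial.count_roots, hA.roots_charpoly_eq_eigenvalues,
          ← Multiset.map_map, Multiset.count_map_eq_count' _ _ RCLike.ofReal_injective]

lemma enorm_eq_norm {d : ℕ} (v : Fin d → ℝ) :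
    _root_.enorm v = ‖(WithLp.toLp 2 v : EuclideanSpace ℝ (Fin d))‖ := by
  simp [_root_.enorm, EuclideanSpace.norm_eq]

lemma enorm_sq {d : ℕ} (v : Fin d → ℝ) : _root_.enorm v ^ 2 = v ⬝ᵥ v := by
  rw [_root_.enorm, Real.sq_sqrt (by positivity)]
  simp [dotProduct, sq]

lemma smul_eq_or_eq_neg_of_enorm_eq_one {d : ℕ} {v : Fin d → ℝ} {a : ℝ}
    (hv : _root_.enorm v = 1) (hav : _root_.enorm (a • v) = 1) : a • v = v ∨ a • v = -v := by
  rw [enorm_eq_norm] at hv hav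
  rw [WithLp.toLp_smul, norm_smul, hv, mul_one, Real.norm_eq_abs] at hav
  rcases (abs_eq zero_le_one).1 hav with rfl | rfl <;> simp

lemma sub_dotProduct_smul_sub_smul {d : ℕ} {x y : Fin d → ℝ} (hx : _root_.enorm x = 1)
    (hy : _root_.enorm y = 1) (a b : ℝ) :
    (x - y) ⬝ᵥ (a • x - b • y) = (a + b) * _root_.enorm (x - y) ^ 2 / 2 := by
  have hxx : x ⬝ᵥ x = 1 := by rw [← enorm_sq, hx, one_pow]
  have hyy : y ⬝ᵥ y = 1 := by rw [← enorm_sq, hy, one_pow]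
  simp only [enorm_sq, sub_dotProduct, dotProduct_sub, dotProduct_smul, smul_eq_mul, hxx, hyy,
    dotProduct_comm y x]
  ring

lemma dvec_mul_enorm {n d : ℕ} (p : Fin n → Fin d → ℝ) (i j : Fin n) (k : Fin d) :
    dvec p i j k * _root_.enorm (p i - p j) = p i k - p j k := by
  by_cases h : p i = p j
  · simp [dvec, h]
  · have : _root_.enorm (p i - p j) ≠ 0 := by simpa [enorm_eq_norm, sub_eq_zero] using h
    simp only [dvec, if_neg h, Pi.smul_apply, Pi.sub_apply, smul_eq_mul]
    field_simp

lemma dvec_dotProduct_smul_sub_smul {n d : ℕ} {p : Fin n → Fin d → ℝ}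
    (hp : ∀ i, _root_.enorm (p i) = 1) (i j : Fin n) (a b : ℝ) :
    dvec p i j ⬝ᵥ (a • p i - b • p j) = (a + b) * _root_.enorm (p i - p j) / 2 := by
  by_cases h : p i = p j
  · simp [dvec, h, enorm_eq_norm]
  · have : _root_.enorm (p i - p j) ≠ 0 := by simpa [enorm_eq_norm, sub_eq_zero] using h
    rw [dvec, if_neg h, smul_dotProduct, sub_dotProduct_smul_sub_smul (hp i) (hp j), smul_eq_mul]
    field_simp

lemma rigidity_conjTranspose_mulVec_apply {n d : ℕ} (G : SimpleGraph (Fin n)) [DecidableRel G.Adj]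
    (p : Fin n → Fin d → ℝ) (x : Fin n × Fin d → ℝ) (e : EdgeIdx G) :
    ((rigidity G p)ᴴ *ᵥ x) e = dvec p e.1.1 e.1.2 ⬝ᵥ fun k => x (e.1.1, k) - x (e.1.2, k) := by
  simp only [mulVec, dotProduct, conjTranspose_apply, star_trivial, rigidity,
    Fintype.sum_prod_type]
  rw [Finset.sum_comm]
  simp [sub_mul, mul_sub, Finset.sum_sub_distrib, ite_mul, mul_comm]

lemma sum_edgeIdx_top {n : ℕ} (F : Fin n → Fin n → ℝ) :
    ∑ e : EdgeIdx (⊤ : SimpleGraph (Fin n)), F e.1.1 e.1.2 =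
      ∑ a, ∑ b, if a < b then F a b else 0 := by
  rw [← Fintype.sum_prod_type', ← Finset.sum_filter]
  refine (Finset.sum_subtype _ (fun e => ?_) fun e : Fin n × Fin n => F e.1 e.2).symm
  simpa using fun h => h.ne

lemma sum_edgeIdx_top_incidence_mul {n : ℕ} (g : Fin n → Fin n → ℝ) (hg : ∀ a b, g b a = -g a b)
    (i : Fin n) :
    ∑ e : EdgeIdx (⊤ : SimpleGraph (Fin n)),
        ((if i = e.1.1 then 1 else 0) - (if i = e.1.2 then 1 else 0)) * g e.1.1 e.1.2
      = ∑ j, g i j := by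
  have hsplit : ∀ j, g i j = (if i < j then g i j else 0) - if j < i then g j i else 0 := by
    intro j
    rcases lt_trichotomy i j with h | rfl | h
    · simp [h, h.not_gt]
    · simp only [lt_irrefl, if_false, sub_self]
      linarith [hg i i]
    · simp [h, h.not_gt, hg i j]
  rw [sum_edgeIdx_top fun a b => ((if i = a then 1 else 0) - (if i = b then 1 else 0)) * g a b,
    Finset.sum_congr rfl fun j _ => hsplit j, Finset.sum_sub_distrib]
  have hpt : ∀ a b, (if a < b then ((if i = a then 1 else 0) - if i = b then 1 else 0) * g a b
      else 0) = (if i = a then (if a < b then g a b else 0) else 0)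
        - if i = b then (if a < b then g a b else 0) else 0 := by
    intro a b; split_ifs <;> ring
  simp only [hpt, Finset.sum_sub_distrib]
  rw [Finset.sum_comm (f := fun a b => if i = a then (if a < b then g a b else 0) else 0)]
  simp

def edgeLengthVec {n d : ℕ} (G : SimpleGraph (Fin n)) [DecidableRel G.Adj]
    (p : Fin n → Fin d → ℝ) : (Fin n → ℝ) →ₗ[ℝ] EdgeIdx G → ℝ where
  toFun f e := (f e.1.1 + f e.1.2) * _root_.enorm (p e.1.1 - p e.1.2)
  map_add' f g := by ext; simp only [Pi.add_apply]; ring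
  map_smul' c f := by ext; simp only [Pi.smul_apply, smul_eq_mul, RingHom.id_apply]; ring

lemma rigidity_top_mulVec_edgeLengthVec {n d : ℕ} {p : Fin n → Fin d → ℝ} (hp : ∑ i, p i = 0)
    {f : Fin n → ℝ} (hf : ∑ i, f i = 0) :
    rigidity ⊤ p *ᵥ edgeLengthVec ⊤ p f = fun v => n * f v.1 * p v.1 v.2 - ∑ j, f j * p j v.2 := by
  ext ⟨i, k⟩
  have hpk : ∑ j, p j k = 0 := by simpa using congrFun hp k
  calc (rigidity ⊤ p *ᵥ edgeLengthVec ⊤ p f) (i, k)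
      = ∑ e : EdgeIdx (⊤ : SimpleGraph (Fin n)),
          ((if i = e.1.1 then 1 else 0) - (if i = e.1.2 then 1 else 0)) *
            ((f e.1.1 + f e.1.2) * (p e.1.1 k - p e.1.2 k)) := by
        refine Finset.sum_congr rfl fun e _ => ?_
        simp only [rigidity, edgeLengthVec, LinearMap.coe_mk, AddHom.coe_mk, ← dvec_mul_enorm]
        ring
    _ = ∑ j, (f i + f j) * (p i k - p j k) :=
        sum_edgeIdx_top_incidence_mul (fun a b => (f a + f b) * (p a k - p b k))
          (fun a b => by ring) i
    _ = n * f i * p i k - ∑ j, f j * p j k := by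
        simp only [mul_sub, add_mul, Finset.sum_sub_distrib, Finset.sum_add_distrib,
          ← Finset.sum_mul, ← Finset.mul_sum, hf, hpk]
        simp

lemma rigidity_conjTranspose_mulVec_smul_sub {n d : ℕ} (G : SimpleGraph (Fin n))
    [DecidableRel G.Adj] {p : Fin n → Fin d → ℝ} (hp : ∀ i, _root_.enorm (p i) = 1)
    (c : ℝ) (f : Fin n → ℝ) (q : Fin d → ℝ) :
    (rigidity G p)ᴴ *ᵥ (fun v => c * f v.1 * p v.1 v.2 - q v.2) =
      (c / 2) • edgeLengthVec G p f := by
  ext e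
  have hdiff : (fun k => c * f e.1.1 * p e.1.1 k - q k - (c * f e.1.2 * p e.1.2 k - q k))
      = c • (f e.1.1 • p e.1.1 - f e.1.2 • p e.1.2) := by
    ext k; simp only [Pi.smul_apply, Pi.sub_apply, smul_eq_mul]; ring
  rw [rigidity_conjTranspose_mulVec_apply, hdiff, dotProduct_smul,
    dvec_dotProduct_smul_sub_smul hp]
  simp only [edgeLengthVec, LinearMap.coe_mk, AddHom.coe_mk, Pi.smul_apply, smul_eq_mul]
  ring

lemma lowerStiffness_top_mulVec_edgeLengthVec {n d : ℕ} {p : Fin n → Fin d → ℝ}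
    (hp : ∀ i, _root_.enorm (p i) = 1) (hsum : ∑ i, p i = 0) {f : Fin n → ℝ} (hf : ∑ i, f i = 0) :
    lowerStiffness ⊤ p *ᵥ edgeLengthVec ⊤ p f = ((n : ℝ) / 2) • edgeLengthVec ⊤ p f := by
  rw [lowerStiffness, ← mulVec_mulVec, rigidity_top_mulVec_edgeLengthVec hsum hf]
  exact rigidity_conjTranspose_mulVec_smul_sub ⊤ hp n f fun k => ∑ j, f j * p j k

lemma stiffness_mulVec_rigidity_mulVec {n d : ℕ} (G : SimpleGraph (Fin n)) [DecidableRel G.Adj]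
    (p : Fin n → Fin d → ℝ) {μ : ℝ} {φ : EdgeIdx G → ℝ} (hφ : lowerStiffness G p *ᵥ φ = μ • φ) :
    stiffness G p *ᵥ (rigidity G p *ᵥ φ) = μ • (rigidity G p *ᵥ φ) := by
  rw [stiffness, mulVec_mulVec, Matrix.mul_assoc, ← mulVec_mulVec, ← lowerStiffness, hφ,
    mulVec_smul]

lemma card_image_le_two_of_smul_eq_smul {ι : Type*} [Fintype ι] {d : ℕ}
    {p : ι → Fin d → ℝ} (hp : ∀ i, _root_.enorm (p i) = 1) {c : ι → ℝ} (hc : c ≠ 0)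
    (hpc : ∀ i j, c i • p i = c j • p j) : (Finset.univ.image p).card ≤ 2 := by
  obtain ⟨i, hi⟩ : ∃ i, c i ≠ 0 := Function.ne_iff.1 hc
  have hci : ∀ j, c j ≠ 0 := by
    intro j hj
    have hpi : p i = 0 := by simpa [hj, hi] using hpc i j
    simpa [hpi, enorm_eq_norm] using hp i
  have hsub : Finset.univ.image p ⊆ {p i, -p i} := by
    intro x hx
    obtain ⟨j, -, rfl⟩ := Finset.mem_image.1 hx
    have hj : p j = ((c j)⁻¹ * c i) • p i := by
      rw [mul_smul, hpc i j, smul_smul, inv_mul_cancel₀ (hci j), one_smul]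
    have hpj := hp j
    rw [hj] at hpj ⊢
    simpa using smul_eq_or_eq_neg_of_enorm_eq_one (hp i) hpj
  exact (Finset.card_le_card hsub).trans Finset.card_le_two

lemma finrank_ker_one_dotProduct {K ι : Type*} [Field K] [Fintype ι] [Nonempty ι] :
    Module.finrank K (LinearMap.ker (dotProductBilin K K (1 : ι → K))) = Fintype.card ι - 1 := by
  classical
  have hne : dotProductBilin K K (1 : ι → K) ≠ 0 := fun h => by
    simpa using LinearMap.congr_fun h (Pi.single (Classical.arbitrary ι) 1)
  have := Module.Dual.finrank_ker_add_one_of_ne_zero hne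
  rw [Module.finrank_fintype_fun_eq_card] at this
  omega

lemma eq_zero_of_rigidity_top_mulVec_edgeLengthVec_eq_zero {n d : ℕ} {p : Fin n → Fin d → ℝ}
    (hp : ∀ i, _root_.enorm (p i) = 1) (hsum : ∑ i, p i = 0)
    (him : 3 ≤ (Finset.univ.image p).card) {f : Fin n → ℝ} (hf : ∑ i, f i = 0)
    (h0 : rigidity ⊤ p *ᵥ edgeLengthVec ⊤ p f = 0) : f = 0 := by
  have hcoord : ∀ i k, n * f i * p i k = ∑ j, f j * p j k := fun i k =>
    sub_eq_zero.1 (by simpa [rigidity_top_mulVec_edgeLengthVec hsum hf] using congrFun h0 (i, k))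
  have hpc : ∀ i j, (n * f i) • p i = (n * f j) • p j := by
    intro i j; ext k; simp only [Pi.smul_apply, smul_eq_mul, hcoord]
  by_contra hf0
  obtain ⟨i, hi⟩ := Function.ne_iff.1 hf0
  have hc : (fun i => (n : ℝ) * f i) ≠ 0 :=
    Function.ne_iff.2 ⟨i, mul_ne_zero (Nat.cast_ne_zero.2 (Fin.pos i).ne') hi⟩
  have := card_image_le_two_of_smul_eq_smul hp hc hpc
  omega

/-- If `p : [n] → ℝᵈ` maps every vertex to the unit sphere, the points sum to
zero, and the image has at least `3` points, then `n/2` is an eigenvalue of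
`L(K_n, p)` with multiplicity at least `n - 1`. -/
theorem half_n_eigenvalue_multiplicity (n d : ℕ) (p : Fin n → Fin d → ℝ)
    (hnorm : ∀ i, _root_.enorm (p i) = 1) (hsum : ∑ i, p i = 0)
    (him : 3 ≤ (Finset.univ.image p).card) :
    n - 1 ≤ Multiset.count ((n : ℝ)/2)
      (Finset.univ.val.map
        (stiffness_isHermitian (⊤ : SimpleGraph (Fin n)) p).eigenvalues) := by
  have : NeZero n := ⟨by rintro rfl; simp at him⟩
  set K := LinearMap.ker (dotProductBilin ℝ ℝ (1 : Fin n → ℝ))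
  have hK (f : K) : ∑ i, f.1 i = 0 := by
    rw [← one_dotProduct]; exact LinearMap.mem_ker.1 f.2
  set T := (rigidity ⊤ p).mulVecLin ∘ₗ edgeLengthVec ⊤ p ∘ₗ K.subtype
  have hT : Function.Injective T := LinearMap.ker_eq_bot.1 <| LinearMap.ker_eq_bot'.2 fun f hf =>
    Subtype.ext (eq_zero_of_rigidity_top_mulVec_edgeLengthVec_eq_zero hnorm hsum him (hK f) hf)
  calc n - 1 = Module.finrank ℝ (LinearMap.range T) := by
        rw [LinearMap.finrank_range_of_inj hT, finrank_ker_one_dotProduct, Fintype.card_fin]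
    _ ≤ _ := (stiffness_isHermitian ⊤ p).finrank_le_count_eigenvalues ?_
  rintro _ ⟨f, rfl⟩
  exact stiffness_mulVec_rigidity_mulVec ⊤ p
    (lowerStiffness_top_mulVec_edgeLengthVec hnorm hsum (hK f))
end
end
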